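/- arXiv:2108.12853 — 7 statements merged into one kernel-verified Lean document; each statement's English description precedes it below -/
import Mathlib

section
/- For any finite-dimensional vector space V of dimension at least 2 over any field K, the covering number of V equals |K| + 1; that is, V is a union of |K|+1 proper subspaces but not a union of fewer. -/
/-!
A family of fewer than `|K| + 1` proper subspaces cannot cover `V`. Indeed, for vectors `u, v`
and a set `A`, the `|K| + 1` points `v` and `u + t • v` of the projective line through `u, v`
give `|K| + 1` sets `A ∪ {point}`; if each lies in a member of the family, two of them lie in
the same member `W` by pigeonhole, and any two of these points span `u` and `v`, so
`A ∪ {u, v} ⊆ W`. By strong induction on size, every finite set, in particular a finite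
spanning set, lies in a single member, which is then not proper.

Conversely the `|K| + 1` lines through the origin cover `K × K`, and pulling them back along a
linear surjection `V → K × K` gives `|K| + 1` proper subspaces covering `V`.
-/

universe u

open Cardinal
/-- The covering number of a module: the least cardinal number of proper submodules whose
union is the whole module. -/
noncomputable def coveringNumber (R M : Type u) [Ring R] [AddCommGroup M] [Module R M] :
    Cardinal.{u} :=
  sInf {c : Cardinal.{u} | ∃ S : Set (Submodule R M),
    (∀ N ∈ S, N ≠ ⊤) ∧ (⋃ N ∈ S, (N : Set M)) = Set.univ ∧ #S = c}

namespace Submodule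

variable {R M M' : Type*} [Ring R] [AddCommGroup M] [Module R M] [AddCommGroup M'] [Module R M']

structure IsProperCover (S : Set (Submodule R M)) : Prop where
  ne_top : ∀ N ∈ S, N ≠ ⊤
  exists_mem : ∀ x : M, ∃ N ∈ S, x ∈ N

variable {S : Set (Submodule R M)}

theorem isProperCover_iff :
    IsProperCover S ↔ (∀ N ∈ S, N ≠ ⊤) ∧ (⋃ N ∈ S, (N : Set M)) = Set.univ := by
  simp only [Set.eq_univ_iff_forall, Set.mem_iUnion₂, SetLike.mem_coe, exists_prop]
  exact ⟨fun h => ⟨h.ne_top, h.exists_mem⟩, fun h => ⟨h.1, h.2⟩⟩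

theorem IsProperCover.image_comap {S : Set (Submodule R M')} (hS : IsProperCover S)
    (f : M →ₗ[R] M') (hf : Function.Surjective f) : IsProperCover (comap f '' S) where
  ne_top := by
    rintro _ ⟨N, hN, rfl⟩ htop
    exact hS.ne_top N hN (comap_injective_of_surjective hf (by rwa [comap_top]))
  exists_mem x := by
    obtain ⟨N, hN, hx⟩ := hS.exists_mem (f x)
    exact ⟨comap f N, Set.mem_image_of_mem _ hN, hx⟩

end Submodule

open Submodule

section CoveringNumber

variable {R M : Type u} [Ring R] [AddCommGroup M] [Module R M] {S : Set (Submodule R M)}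

theorem coveringNumber_le (hS : IsProperCover S) : coveringNumber R M ≤ #S :=
  csInf_le' ⟨S, (isProperCover_iff.mp hS).1, (isProperCover_iff.mp hS).2, rfl⟩

theorem le_coveringNumber {c : Cardinal} (hne : ∃ S : Set (Submodule R M), IsProperCover S)
    (h : ∀ S : Set (Submodule R M), IsProperCover S → c ≤ #S) : c ≤ coveringNumber R M := by
  obtain ⟨S, hS⟩ := hne
  refine le_csInf ⟨#S, S, (isProperCover_iff.mp hS).1, (isProperCover_iff.mp hS).2, rfl⟩ ?_
  rintro _ ⟨T, hT_ne_top, hT_cover, rfl⟩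
  exact h T (isProperCover_iff.mpr ⟨hT_ne_top, hT_cover⟩)

end CoveringNumber

def linePoint {K V : Type*} [Semiring K] [AddCommMonoid V] [Module K V] (u v : V) :
    Option K → V
  | none => v
  | some t => u + t • v

section LowerBound

variable {K V : Type u} [DivisionRing K] [AddCommGroup V] [Module K V] {S : Set (Submodule K V)}

theorem mem_of_linePoint_mem {W : Submodule K V} {u v : V} {a b : Option K} (hab : a ≠ b)
    (ha : linePoint u v a ∈ W) (hb : linePoint u v b ∈ W) : u ∈ W ∧ v ∈ W := by
  have hu_of : ∀ t : K, u + t • v ∈ W → v ∈ W → u ∈ W := fun t h hv => by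
    simpa using W.sub_mem h (W.smul_mem t hv)
  rcases a with _ | s <;> rcases b with _ | t
  · exact absurd rfl hab
  · exact ⟨hu_of t hb ha, ha⟩
  · exact ⟨hu_of s ha hb, hb⟩
  · have hst : s - t ≠ 0 := sub_ne_zero.mpr fun h => hab (congrArg some h)
    have hv : v ∈ W := by
      rw [← W.smul_mem_iff hst, sub_smul]
      simpa [linePoint] using W.sub_mem ha hb
    exact ⟨hu_of s ha hv, hv⟩

theorem exists_insert_insert_subset_of_forall_linePoint (hS : #S < #K + 1) {A : Set V} {u v : V}
    (h : ∀ o : Option K, ∃ W ∈ S, insert (linePoint u v o) A ⊆ W) :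
    ∃ W ∈ S, insert u (insert v A) ⊆ W := by
  choose W hWS hW using h
  have hW_not_inj : ¬ Function.Injective fun o => (⟨W o, hWS o⟩ : S) := fun hinj =>
    (mk_le_of_injective hinj).not_gt (mk_option ▸ hS)
  obtain ⟨a, b, hWab, hab⟩ := Function.not_injective_iff.mp hW_not_inj
  have hWab : W a = W b := congrArg Subtype.val hWab
  have ⟨hu, hv⟩ := mem_of_linePoint_mem hab (hW a (Set.mem_insert _ _))
    (hWab ▸ hW b (Set.mem_insert _ _))
  exact ⟨W a, hWS a, Set.insert_subset hu (Set.insert_subset hv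
    ((Set.subset_insert _ _).trans (hW a)))⟩

theorem Submodule.IsProperCover.exists_finset_subset (hS : IsProperCover S)
    (hcard : #S < #K + 1) (A : Finset V) : ∃ W ∈ S, (A : Set V) ⊆ W := by
  classical
  induction hn : A.card using Nat.strong_induction_on generalizing A with
  | _ n ih =>
  rcases le_or_gt n 1 with hA | hA
  · obtain ⟨x, hx⟩ := Finset.card_le_one_iff_subset_singleton.mp (hn ▸ hA)
    obtain ⟨W, hWS, hxW⟩ := hS.exists_mem x
    exact ⟨W, hWS, fun y hy => by rw [Finset.subset_singleton_iff'.mp hx y hy]; exact hxW⟩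
  obtain ⟨u, hu, v, hv, huv⟩ := Finset.one_lt_card.mp (hn ▸ hA)
  have hvu : v ∈ A.erase u := Finset.mem_erase.mpr ⟨huv.symm, hv⟩
  set B := (A.erase u).erase v
  have hB : B.card + 2 = n := by
    rw [Finset.card_erase_of_mem hvu, Finset.card_erase_of_mem hu]
    omega
  have hAB : A = insert u (insert v B) := by
    rw [Finset.insert_erase hvu, Finset.insert_erase hu]
  have hline (o : Option K) : ∃ W ∈ S, insert (linePoint u v o) (B : Set V) ⊆ W := by
    have hcard := Finset.card_insert_le (linePoint u v o) B
    obtain ⟨W, hWS, hW⟩ := ih _ (by omega) (insert (linePoint u v o) B) rfl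
    exact ⟨W, hWS, by simpa using hW⟩
  obtain ⟨W, hWS, hW⟩ := exists_insert_insert_subset_of_forall_linePoint hcard hline
  exact ⟨W, hWS, by simpa [hAB] using hW⟩

theorem Submodule.IsProperCover.mk_add_one_le_mk [Module.Finite K V]
    (hS : IsProperCover S) : #K + 1 ≤ #S := by
  by_contra! hcard
  obtain ⟨A, hA⟩ := Module.Finite.fg_top (R := K) (M := V)
  obtain ⟨W, hWS, hW⟩ := hS.exists_finset_subset hcard A
  exact hS.ne_top W hWS (top_le_iff.mp (hA ▸ span_le.mpr hW))

end LowerBound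

section UpperBound

variable (K : Type u) [Field K]

def lineOfOption : Option K → Submodule K (K × K)
  | none => LinearMap.ker (LinearMap.snd K K K)
  | some t => LinearMap.ker (LinearMap.fst K K K - t • LinearMap.snd K K K)

variable {K}

theorem linePoint_mem_lineOfOption_iff {a b : Option K} :
    linePoint ((0, 1) : K × K) (1, 0) a ∈ lineOfOption K b ↔ a = b := by
  rcases a with _ | s <;> rcases b with _ | t <;>
    simp [linePoint, lineOfOption, sub_eq_zero]

theorem lineOfOption_injective : Function.Injective (lineOfOption K) := fun _ _ hab =>
  linePoint_mem_lineOfOption_iff.mp (hab ▸ linePoint_mem_lineOfOption_iff.mpr rfl)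

theorem isProperCover_range_lineOfOption : IsProperCover (Set.range (lineOfOption K)) where
  ne_top := by
    rintro _ ⟨a, rfl⟩ htop
    obtain ⟨b, hba⟩ := exists_ne a
    exact hba (linePoint_mem_lineOfOption_iff.mp (htop ▸ mem_top))
  exists_mem x := by
    by_cases hx : x.2 = 0
    · exact ⟨_, ⟨none, rfl⟩, by simpa [lineOfOption] using hx⟩
    · exact ⟨_, ⟨some (x.1 / x.2), rfl⟩, by simp [lineOfOption, div_mul_cancel₀ _ hx]⟩

theorem Module.Basis.surjective_coord_prod_coord {ι R M : Type*} [CommRing R] [AddCommGroup M]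
    [Module R M] (b : Module.Basis ι R M) {i j : ι} (hij : i ≠ j) :
    Function.Surjective ((b.coord i).prod (b.coord j)) := fun x =>
  ⟨x.1 • b i + x.2 • b j, by simp [hij, hij.symm]⟩

theorem exists_surjective_prod_self {V : Type u} [AddCommGroup V] [Module K V]
    [FiniteDimensional K V] (hV : 2 ≤ Module.finrank K V) :
    ∃ f : V →ₗ[K] K × K, Function.Surjective f :=
  ⟨_, (Module.finBasis K V).surjective_coord_prod_coord
    (i := ⟨0, by omega⟩) (j := ⟨1, by omega⟩) (by simp)⟩

end UpperBound

/-- For any finite-dimensional vector space `V` of dimension at least 2 over any field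
`K`, the covering number of `V` equals `|K| + 1`: `V` is a union of `|K| + 1` proper
subspaces but not a union of fewer. -/
theorem stmt5 (K V : Type u) [Field K] [AddCommGroup V] [Module K V]
    [FiniteDimensional K V] (hV : 2 ≤ Module.finrank K V) :
    coveringNumber K V = #K + 1 ∧
    (∃ S : Set (Submodule K V), (∀ N ∈ S, N ≠ ⊤) ∧
      (⋃ N ∈ S, (N : Set V)) = Set.univ ∧ #S = #K + 1) := by
  obtain ⟨f, hf⟩ := exists_surjective_prod_self hV
  set S := comap f '' Set.range (lineOfOption K)
  have hS : IsProperCover S := isProperCover_range_lineOfOption.image_comap f hf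
  have hcard : #S = #K + 1 := by
    rw [mk_image_eq (comap_injective_of_surjective hf), mk_range_eq _ lineOfOption_injective,
      mk_option]
  obtain ⟨hS_ne_top, hS_cover⟩ := isProperCover_iff.mp hS
  refine ⟨le_antisymm (hcard ▸ coveringNumber_le hS) ?_, S, hS_ne_top, hS_cover, hcard⟩
  exact le_coveringNumber ⟨S, hS⟩ fun T hT => hT.mk_add_one_le_mk
end

section
/- Any proper algebraic subset of affine space K^m over an infinite field contains only finitely many distinct affine hyperplanes. -/
open MvPolynomial

private lemma aux_single_of_sum_le {m : ℕ} {d : Fin m →₀ ℕ} {j : Fin m}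
    (h1 : (d.sum fun _ n => n) ≤ 1) (hj : d j ≠ 0) : d = Finsupp.single j 1 := by
  classical
  have hjs : j ∈ d.support := Finsupp.mem_support_iff.mpr hj
  have hsum : (d.sum fun _ n => n) = ∑ i ∈ d.support, d i := rfl
  have hsplit : d j + ∑ i ∈ d.support.erase j, d i = ∑ i ∈ d.support, d i :=
    Finset.add_sum_erase _ _ hjs
  have hdj1 : d j = 1 ∧ ∑ i ∈ d.support.erase j, d i = 0 := by
    rw [hsum] at h1; omega
  have hzero : ∀ i ∈ d.support.erase j, d i = 0 := by
    intro i hi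
    exact Finset.sum_eq_zero_iff.mp hdj1.2 i hi
  ext i
  rcases eq_or_ne i j with rfl | hij
  · simp [hdj1.1]
  · rw [Finsupp.single_apply, if_neg (Ne.symm hij)]
    by_cases hi : i ∈ d.support
    · exact hzero i (Finset.mem_erase.mpr ⟨hij, hi⟩)
    · exact Finsupp.notMem_support_iff.mp hi

private lemma aux_key {K : Type*} [Field K] [Infinite K] {m : ℕ}
    {f : MvPolynomial (Fin m) K} (hf : f.totalDegree = 1) :
    Prime f ∧ ∀ p : MvPolynomial (Fin m) K,
      (∀ x, eval x f = 0 → eval x p = 0) → f ∣ p := by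
  classical
  have hf0 : f ≠ 0 := by
    intro h; rw [h, totalDegree_zero] at hf; exact one_ne_zero hf.symm
  -- find the leading linear monomial
  obtain ⟨d, hd, hdeg⟩ := Finset.exists_mem_eq_sup f.support
    (support_nonempty.mpr hf0) fun e => e.sum fun _ n => n
  rw [MvPolynomial.totalDegree] at hf
  have hd1 : (d.sum fun _ n => n) = 1 := by rw [← hf, hdeg]
  have hdne : d ≠ 0 := by intro h; rw [h] at hd1; simp at hd1
  obtain ⟨j, hj⟩ : ∃ j, d j ≠ 0 := by
    by_contra h; push_neg at h; exact hdne (Finsupp.ext h)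
  have hdsingle : d = Finsupp.single j 1 := aux_single_of_sum_le hd1.le hj
  set a : K := f.coeff (Finsupp.single j 1) with ha_def
  have ha : a ≠ 0 := by
    rw [ha_def, ← hdsingle]; exact mem_support_iff.mp hd
  set g : MvPolynomial (Fin m) K := f - C a * X j with hg
  have hfg : f = g + C a * X j := by rw [hg]; ring
  have hgj : j ∉ g.vars := by
    intro hmem
    rw [mem_vars] at hmem
    obtain ⟨e, he, hje⟩ := hmem
    have hje' : e j ≠ 0 := Finsupp.mem_support_iff.mp hje
    have hcoeff : g.coeff e = f.coeff e - a * (X j : MvPolynomial (Fin m) K).coeff e := by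
      simp [hg, coeff_sub, coeff_C_mul]
    rcases eq_or_ne e (Finsupp.single j 1) with rfl | hne
    · rw [coeff_X', if_pos rfl, mul_one, ← ha_def, sub_self] at hcoeff
      exact MvPolynomial.mem_support_iff.mp he hcoeff
    · rw [coeff_X', if_neg (fun h => hne h.symm)] at hcoeff
      have hef : e ∈ f.support := by
        rw [mem_support_iff]
        intro h
        exact MvPolynomial.mem_support_iff.mp he (by rw [hcoeff, h]; ring)
      have : (e.sum fun _ n => n) ≤ 1 := by
        rw [← hf]; exact Finset.le_sup (f := fun e => e.sum fun _ n => n) hef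
      exact hne (aux_single_of_sum_le this hje')
  -- the substitution homomorphism
  set v : Fin m → MvPolynomial (Fin m) K :=
    fun i => if i = j then -(C a⁻¹) * g else X i with hv
  have hvj : v j = -(C a⁻¹) * g := by simp [hv]
  have hvi : ∀ i, i ≠ j → v i = X i := fun i hij => by simp [hv, hij]
  have hCa : (C a⁻¹ : MvPolynomial (Fin m) K) * C a = 1 := by
    rw [← C_mul, inv_mul_cancel₀ ha, C_1]
  have hgfix : aeval v g = g := by
    have := MvPolynomial.hom_congr_vars
      (f₁ := ((aeval v : MvPolynomial (Fin m) K →ₐ[K] MvPolynomial (Fin m) K) :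
        MvPolynomial (Fin m) K →+* MvPolynomial (Fin m) K))
      (f₂ := RingHom.id _) (p₁ := g) (p₂ := g)
      (by ext r; simp [algebraMap_eq])
      (fun i hi _ => by
        have hij : i ≠ j := fun h => hgj (h ▸ hi)
        simp [hvi i hij])
      rfl
    simpa using this
  have hφf : aeval v f = 0 := by
    rw [hfg, map_add, map_mul, aeval_X, hgfix]
    have haC : aeval v (C a) = (C a : MvPolynomial (Fin m) K) := by
      simp [algebraMap_eq]
    rw [haC, hvj]
    linear_combination (-g) * hCa
  have hXj : (X j : MvPolynomial (Fin m) K) - (-(C a⁻¹) * g) = C a⁻¹ * f := by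
    rw [hg]
    linear_combination (-(X j : MvPolynomial (Fin m) K)) * hCa
  have hdvd_sub : ∀ q : MvPolynomial (Fin m) K, f ∣ q - aeval v q := by
    intro q
    induction q using MvPolynomial.induction_on with
    | C c => simp [algebraMap_eq]
    | add p q hp hq =>
        rw [map_add]
        have h := dvd_add hp hq
        convert h using 1; ring
    | mul_X p i hp =>
        rw [map_mul, aeval_X]
        rcases eq_or_ne i j with rfl | hij
        · rw [hvj]
          have heq : p * X i - aeval v p * (-(C a⁻¹) * g) =
              (p - aeval v p) * X i + aeval v p * (C a⁻¹ * f) := by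
            linear_combination (aeval v p) * hXj
          rw [heq]
          exact dvd_add (hp.mul_right _) ((dvd_mul_left f _).mul_left _)
        · rw [hvi i hij]
          have heq : p * X i - aeval v p * X i = (p - aeval v p) * X i := by ring
          rw [heq]
          exact hp.mul_right _
  -- evaluation of the substitution
  have heval : ∀ (y : Fin m → K) (q : MvPolynomial (Fin m) K),
      eval y (aeval v q) = eval (fun i => eval y (v i)) q := by
    intro y q
    have : (eval y).comp ((aeval v : MvPolynomial (Fin m) K →ₐ[K] MvPolynomial (Fin m) K) :
        MvPolynomial (Fin m) K →+* MvPolynomial (Fin m) K) =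
        eval (fun i => eval y (v i)) := by
      apply MvPolynomial.ringHom_ext
      · intro r; simp [algebraMap_eq]
      · intro i; simp
    exact RingHom.congr_fun this q
  have hpoint : ∀ y : Fin m → K, eval (fun i => eval y (v i)) f = 0 := by
    intro y
    set x : Fin m → K := fun i => eval y (v i) with hx
    have hxj : x j = -(a⁻¹ * eval y g) := by simp [hx, hvj]
    have hxg : eval x g = eval y g := by
      have := MvPolynomial.hom_congr_vars (f₁ := eval x) (f₂ := eval y) (p₁ := g) (p₂ := g)
        (by ext r; simp)
        (fun i hi _ => by
          have hij : i ≠ j := fun h => hgj (h ▸ hi)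
          simp [hx, hvi i hij])
        rfl
      exact this
    rw [hfg, map_add, map_mul, eval_C, eval_X, hxg, hxj]
    field_simp
    ring
  have hker : ∀ q : MvPolynomial (Fin m) K, aeval v q = 0 → f ∣ q := by
    intro q hq
    have := hdvd_sub q
    rwa [hq, sub_zero] at this
  refine ⟨⟨hf0, ?_, ?_⟩, ?_⟩
  · -- not a unit
    intro hu
    have hz := hpoint 0
    exact ((hu.map (eval fun i => eval 0 (v i))).ne_zero) hz
  · -- prime condition
    intro q r hqr
    obtain ⟨s, hs⟩ := hqr
    have h0 : aeval v q * aeval v r = 0 := by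
      rw [← map_mul, hs, map_mul, hφf, zero_mul]
    rcases mul_eq_zero.mp h0 with h | h
    · exact Or.inl (hker q h)
    · exact Or.inr (hker r h)
  · -- divisibility from vanishing
    intro p hp
    apply hker
    apply MvPolynomial.funext
    intro y
    rw [heval, map_zero]
    exact hp _ (hpoint y)

/-- Any proper algebraic subset of affine space `K^m` over an infinite field (the zero
locus of a nonzero ideal) contains only finitely many distinct affine hyperplanes, where
a hyperplane is the zero set of a polynomial of total degree 1. -/
theorem stmt8 (K : Type*) [Field K] [Infinite K] (m : ℕ) (hm : 1 ≤ m)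
    (J : Ideal (MvPolynomial (Fin m) K)) (hJ : J ≠ ⊥) :
    {H : Set (Fin m → K) |
      (∃ f : MvPolynomial (Fin m) K, f.totalDegree = 1 ∧
          H = {x | MvPolynomial.eval x f = 0}) ∧
      H ⊆ {x | ∀ p ∈ J, MvPolynomial.eval x p = 0}}.Finite := by
  classical
  obtain ⟨p, hpJ, hp0⟩ := Submodule.exists_mem_ne_zero_of_ne_bot hJ
  apply Set.Finite.subset
    (((UniqueFactorizationMonoid.factors p).toFinset.finite_toSet).image
      (fun q => {x : Fin m → K | MvPolynomial.eval x q = 0}))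
  rintro H ⟨⟨f, hf1, rfl⟩, hsub⟩
  obtain ⟨hprime, hdvd⟩ := aux_key hf1
  have hfp : f ∣ p := hdvd p (fun x hx => hsub hx p hpJ)
  obtain ⟨q, hq, hassoc⟩ :=
    UniqueFactorizationMonoid.exists_mem_factors_of_dvd hp0 hprime.irreducible hfp
  refine ⟨q, by simpa using hq, ?_⟩
  obtain ⟨u, hu⟩ := hassoc
  ext x
  simp only [Set.mem_setOf_eq]
  rw [← hu, map_mul]
  have hune : MvPolynomial.eval x (u : MvPolynomial (Fin m) K) ≠ 0 :=
    (u.isUnit.map (MvPolynomial.eval x)).ne_zero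
  constructor
  · rintro h
    rcases mul_eq_zero.mp h with h | h
    · exact h
    · exact absurd h hune
  · intro h; rw [h, zero_mul]
end

section
/- For a field K of infinite cardinality κ, the affine space K^n with the Zariski topology is a κ-Baire space: the intersection of any family of fewer than κ dense open subsets is dense. Moreover, it is not an ℵ-Baire space for any cardinal ℵ > κ. -/
universe u

open Cardinal

/-- The Zariski topology on affine `n`-space over a commutative ring, generated by the
complements of hypersurfaces. -/
def zariskiAffine (K : Type u) [CommRing K] (n : ℕ) : TopologicalSpace (Fin n → K) :=
  TopologicalSpace.generateFrom
    {U | ∃ p : MvPolynomial (Fin n) K, U = {x | MvPolynomial.eval x p ≠ 0}}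

namespace Stmt9Aux

open MvPolynomial

variable {K : Type u} [Field K] [Infinite K]

/-- Avoid fewer than `#K` many finite subsets of `K`. -/
lemma exists_avoid {ι : Type u} (hι : #ι < #K) (s : ι → Set K)
    (hs : ∀ i, (s i).Finite) : ∃ t : K, ∀ i, t ∉ s i := by
  by_contra h
  push_neg at h
  have hcover : (Set.univ : Set K) ⊆ ⋃ i, s i := fun t _ => Set.mem_iUnion.2 (h t)
  have hK : #K ≤ #(⋃ i, s i) := by
    have h0 := Cardinal.mk_le_mk_of_subset hcover
    rwa [Cardinal.mk_univ] at h0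
  rcases finite_or_infinite ι with hfin | hinf
  · have hfin2 : (⋃ i, s i).Finite := Set.finite_iUnion hs
    exact absurd hK (not_le.2 (hfin2.lt_aleph0.trans_le (aleph0_le_mk K)))
  · have h1 : #(⋃ i, s i) ≤ #ι * ℵ₀ :=
      (Cardinal.mk_iUnion_le s).trans
        (mul_le_mul_right (ciSup_le fun i => (hs i).lt_aleph0.le) _)
    have h2 : #ι * ℵ₀ = #ι := Cardinal.mul_aleph0_eq (aleph0_le_mk ι)
    exact absurd ((hK.trans h1).trans_eq h2) (not_le.2 hι)

/-- Key lemma: fewer than `#K` many nonzero polynomials have a common nonvanishing point. -/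
lemma key : ∀ (n : ℕ) (ι : Type u), #ι < #K → ∀ p : ι → MvPolynomial (Fin n) K,
    (∀ i, p i ≠ 0) → ∃ x : Fin n → K, ∀ i, MvPolynomial.eval x (p i) ≠ 0 := by
  intro n
  induction n with
  | zero =>
    intro ι hι p hp
    refine ⟨Fin.elim0, fun i => ?_⟩
    obtain ⟨a, ha⟩ := MvPolynomial.C_surjective (Fin 0) (p i)
    rw [← ha, MvPolynomial.eval_C]
    intro h0
    exact hp i (by rw [← ha, h0, map_zero])
  | succ n ih =>
    intro ι hι p hp
    have hq : ∀ i, (MvPolynomial.finSuccEquiv K n (p i)) ≠ 0 := by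
      intro i h0
      exact hp i ((map_eq_zero_iff _ (MvPolynomial.finSuccEquiv K n).injective).1 h0)
    have hlc : ∀ i, (MvPolynomial.finSuccEquiv K n (p i)).leadingCoeff ≠ 0 := fun i =>
      Polynomial.leadingCoeff_ne_zero.2 (hq i)
    obtain ⟨a, ha⟩ := ih ι hι (fun i => (MvPolynomial.finSuccEquiv K n (p i)).leadingCoeff) hlc
    have hr : ∀ i, ((MvPolynomial.finSuccEquiv K n (p i)).map (MvPolynomial.eval a)) ≠ 0 := by
      intro i h0
      apply ha i
      have := congrArg (fun q => Polynomial.coeff q (MvPolynomial.finSuccEquiv K n (p i)).natDegree) h0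
      simpa [Polynomial.coeff_map, Polynomial.coeff_natDegree] using this
    obtain ⟨t, ht⟩ := exists_avoid hι
      (fun i => {x | Polynomial.IsRoot ((MvPolynomial.finSuccEquiv K n (p i)).map (MvPolynomial.eval a)) x})
      (fun i => Polynomial.finite_setOf_isRoot (hr i))
    refine ⟨Fin.cons t a, fun i => ?_⟩
    rw [MvPolynomial.eval_eq_eval_mv_eval']
    exact ht i

variable (K) in
lemma isBasis (n : ℕ) :
    @TopologicalSpace.IsTopologicalBasis _ (zariskiAffine K n)
      {U | ∃ p : MvPolynomial (Fin n) K, U = {x | MvPolynomial.eval x p ≠ 0}} := by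
  letI := zariskiAffine K n
  refine TopologicalSpace.IsTopologicalBasis.mk ?_ ?_ rfl
  · rintro t₁ ⟨p, rfl⟩ t₂ ⟨q, rfl⟩ x ⟨hx₁, hx₂⟩
    refine ⟨{x | MvPolynomial.eval x (p * q) ≠ 0}, ⟨p * q, rfl⟩, ?_, ?_⟩
    · simpa using mul_ne_zero hx₁ hx₂
    · intro y hy
      simp only [Set.mem_setOf_eq, map_mul] at hy ⊢
      exact ⟨fun h => hy (by simp [h]), fun h => hy (by simp [h])⟩
  · apply Set.eq_univ_of_forall
    intro x
    exact ⟨{y | MvPolynomial.eval y (1 : MvPolynomial (Fin n) K) ≠ 0}, ⟨1, rfl⟩, by simp⟩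

end Stmt9Aux

/-- For a field `K` of infinite cardinality `κ`, affine space `K^n` (with `n ≥ 1`) with
the Zariski topology is a `κ`-Baire space: any family of fewer than `κ` dense open sets
has dense intersection.  Moreover it is not an `ℵ`-Baire space for any cardinal
`ℵ > κ`. -/
theorem stmt9 (K : Type u) [Field K] [Infinite K] (n : ℕ) (hn : 1 ≤ n) :
    (∀ ι : Type u, #ι < #K → ∀ U : ι → Set (Fin n → K),
      (∀ i, @IsOpen _ (zariskiAffine K n) (U i)) →
      (∀ i, @Dense _ (zariskiAffine K n) (U i)) →
      @Dense _ (zariskiAffine K n) (⋂ i, U i)) ∧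
    (∀ aleph : Cardinal.{u}, #K < aleph →
      ¬ (∀ ι : Type u, #ι < aleph → ∀ U : ι → Set (Fin n → K),
        (∀ i, @IsOpen _ (zariskiAffine K n) (U i)) →
        (∀ i, @Dense _ (zariskiAffine K n) (U i)) →
        @Dense _ (zariskiAffine K n) (⋂ i, U i))) := by
  letI := zariskiAffine K n
  have hbasis := Stmt9Aux.isBasis K n
  constructor
  · intro ι hι U hopen hdense
    have hx : ∀ i, ∃ p : MvPolynomial (Fin n) K,
        p ≠ 0 ∧ {x | MvPolynomial.eval x p ≠ 0} ⊆ U i := by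
      intro i
      obtain ⟨x, hxU⟩ := (hdense i).nonempty
      obtain ⟨o, ho, hxo, hoU⟩ := hbasis.exists_subset_of_mem_open hxU (hopen i)
      obtain ⟨p, rfl⟩ := ho
      exact ⟨p, fun h0 => hxo (by simp [h0]), hoU⟩
    choose p hp0 hpU using hx
    rw [hbasis.dense_iff]
    rintro o ⟨q, rfl⟩ ⟨y, hy⟩
    have hq0 : q ≠ 0 := fun h => hy (by simp [h])
    have hcard : #(Option ι) < #K := by
      rw [Cardinal.mk_option]
      exact Cardinal.add_lt_of_lt (aleph0_le_mk K) hι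
        (one_lt_aleph0.trans_le (aleph0_le_mk K))
    obtain ⟨x, hx⟩ := Stmt9Aux.key n (Option ι) hcard (fun o => o.elim q p)
      (by rintro (_ | i); exacts [hq0, hp0 i])
    exact ⟨x, hx none, Set.mem_iInter.2 fun i => hpU i (hx (some i))⟩
  · intro aleph haleph hBaire
    have hcard : #(Fin n → K) < aleph := by
      have hK : #(Fin n → K) = #K := by
        rw [Cardinal.mk_arrow]
        simp only [Cardinal.mk_fin, Cardinal.lift_natCast, Cardinal.lift_id, Cardinal.lift_uzero]
        exact_mod_cast Cardinal.power_nat_eq (aleph0_le_mk K) hn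
      rw [hK]; exact haleph
    set U : (Fin n → K) → Set (Fin n → K) := fun x => {x}ᶜ with hU
    have hopen : ∀ x, IsOpen (U x) := by
      intro x
      have : U x = ⋃ i : Fin n,
          {y | MvPolynomial.eval y (MvPolynomial.X i - MvPolynomial.C (x i)) ≠ 0} := by
        ext y
        simp only [hU, Set.mem_compl_iff, Set.mem_singleton_iff, Set.mem_iUnion,
          Set.mem_setOf_eq, map_sub, MvPolynomial.eval_X, MvPolynomial.eval_C, sub_ne_zero]
        exact Function.ne_iff
      rw [this]
      exact isOpen_iUnion fun i =>
        TopologicalSpace.isOpen_generateFrom_of_mem ⟨_, rfl⟩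
    have hdense : ∀ x, Dense (U x) := by
      intro x
      rw [hbasis.dense_iff]
      rintro o ⟨q, rfl⟩ ⟨y, hy⟩
      have hq0 : q ≠ 0 := fun h => hy (by simp [h])
      set i0 : Fin n := ⟨0, hn⟩
      have hr0 : q * (MvPolynomial.X i0 - MvPolynomial.C (x i0)) ≠ 0 := by
        refine mul_ne_zero hq0 ?_
        intro h0
        have := congrArg (MvPolynomial.eval (fun _ => x i0 + 1)) h0
        simp at this
      have : ∃ z : Fin n → K,
          MvPolynomial.eval z (q * (MvPolynomial.X i0 - MvPolynomial.C (x i0))) ≠ 0 := by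
        by_contra h
        push_neg at h
        exact hr0 (MvPolynomial.funext fun z => by simpa using h z)
      obtain ⟨z, hz⟩ := this
      rw [map_mul] at hz
      refine ⟨z, fun h => hz (by simp [h]), ?_⟩
      simp only [hU, Set.mem_compl_iff, Set.mem_singleton_iff]
      intro hzx
      apply hz
      subst hzx
      simp
    have hd := hBaire (Fin n → K) hcard U hopen hdense
    have hempty : ⋂ x, U x = (∅ : Set (Fin n → K)) := by
      ext y
      simp only [hU, Set.mem_iInter, Set.mem_compl_iff, Set.mem_singleton_iff,
        Set.mem_empty_iff_false, iff_false, not_forall, not_not]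
      exact ⟨y, rfl⟩
    rw [hempty] at hd
    exact Set.not_nonempty_empty hd.nonempty
end

section
/- Let M be a finite length semisimple module over a commutative unital ring R, and let S_M be the set of maximal ideals m of R with dim_{R/m}(M/mM) ≥ 2. If S_M is empty, then M is cyclic; otherwise the covering number of M equals min over m in S_M of |R/m| + 1. -/
/-!
For a maximal ideal `m` write `V_m = M/mM`, a vector space over `R/m`. If `dim V_m ≥ 2`, the
preimages in `M` of the `|R/m| + 1` lines of a plane quotient of `V_m` cover `M`.

Conversely, let `S` cover `M` by proper submodules. A proper submodule `N` of the finitely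
generated `M` lies in a maximal one, whose simple quotient is killed by a maximal ideal `m`, so
`N + mM ≠ M`. As `M` is Artinian only finitely many `V_m` are nonzero, so by the Chinese remainder
theorem `M` maps onto `∏ V_m`. If for every `m` the proper images in `V_m` of the members of `S`
missed some vector, a common lift of these vectors would lie in no member of `S`. Hence some `V_m`
is covered by proper subspaces indexed by part of `S`, which forces `dim V_m ≥ 2` and
`|S| ≥ |R/m| + 1`: either the members through a fixed `u ≠ 0` already cover and one passes to
`V_m/⟨u⟩`, or some `v` shares no member with `u`, and then the `|R/m| + 1` points `v` and `u + tv`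
lie in pairwise distinct members. Lifting generators of all `V_m` in the same way shows that `M` is
cyclic when every `dim V_m ≤ 1`.
-/

universe u

open Cardinal

/-- The set of maximal ideals `m` of `R` with `dim_{R/m} (M/mM) ≥ 2`. -/
def SMax (R M : Type u) [CommRing R] [AddCommGroup M] [Module R M] :
    Set (MaximalSpectrum R) :=
  {m | 2 ≤ Module.rank (R ⧸ m.asIdeal) (M ⧸ (m.asIdeal • ⊤ : Submodule R M))}

open Submodule Function

section VectorSpace

variable {K V : Type*} [Field K] [AddCommGroup V] [Module K V]

theorem two_le_rank_of_cover {ι : Type*} (W : ι → Submodule K V) (hW : ∀ i, W i ≠ ⊤)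
    (hcov : ∀ v, ∃ i, v ∈ W i) : 2 ≤ Module.rank K V := by
  rw [Cardinal.two_le_iff_one_lt, ← not_le, Module.rank_le_one_iff_top_isPrincipal]
  rintro ⟨v, hv⟩
  obtain ⟨i, hi⟩ := hcov v
  exact hW i (top_le_iff.mp (hv ▸ (span_singleton_le_iff_mem v _).mpr hi))

theorem exists_cover_option_of_two_le_rank (h : 2 ≤ Module.rank K V) :
    ∃ W : Option K → Submodule K V, (∀ a, W a ≠ ⊤) ∧ ∀ v, ∃ a, v ∈ W a := by
  let b := Module.Basis.ofVectorSpace K V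
  obtain ⟨i, j, hij⟩ := Cardinal.two_le_iff.mp (b.mk_eq_rank''.symm ▸ h)
  let f : Option K → Module.Dual K V := fun a =>
    a.elim (b.coord i) fun t => b.coord j - t • b.coord i
  refine ⟨fun a => LinearMap.ker (f a), fun a => ?_, fun v => ?_⟩
  · rw [Ne, LinearMap.ker_eq_top]
    intro h0
    cases a with
    | none => simpa [f] using LinearMap.congr_fun h0 (b i)
    | some t => simpa [f, Finsupp.single_apply, hij] using LinearMap.congr_fun h0 (b j)
  · by_cases hv : b.coord i v = 0
    · exact ⟨none, hv⟩
    · refine ⟨some (b.coord j v / b.coord i v), ?_⟩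
      simp only [f, Option.elim, LinearMap.mem_ker, LinearMap.sub_apply, LinearMap.smul_apply,
        smul_eq_mul, div_mul_cancel₀ _ hv, sub_self]

/-- For independent `u`, `v` these `|K| + 1` vectors span the distinct lines of the plane
`⟨u, v⟩`. -/
def projLinePoint (u v : V) (a : Option K) : V :=
  a.elim v fun t => u + t • v

theorem Submodule.mem_and_mem_of_projLinePoint_mem {P : Submodule K V} {u v : V}
    {a b : Option K} (hab : a ≠ b) (ha : projLinePoint u v a ∈ P)
    (hb : projLinePoint u v b ∈ P) : u ∈ P ∧ v ∈ P := by
  have hu_of_hv : v ∈ P → ∀ t : K, u + t • v ∈ P → u ∈ P := fun hvP t h =>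
    (P.add_mem_iff_left (P.smul_mem t hvP)).mp h
  rcases a with _ | t <;> rcases b with _ | s
  · exact absurd rfl hab
  · exact ⟨hu_of_hv ha s hb, ha⟩
  · exact ⟨hu_of_hv hb t ha, hb⟩
  · have hvP : v ∈ P := by
      have hts : t - s ≠ 0 := sub_ne_zero.mpr fun h => hab (h ▸ rfl)
      rw [← P.smul_mem_iff hts]
      convert P.sub_mem ha hb using 1
      simp only [projLinePoint, Option.elim]
      module
    exact ⟨hu_of_hv hvP t ha, hvP⟩

end VectorSpace

theorem card_add_one_le_of_cover {K : Type u} {V : Type*} [Field K] [AddCommGroup V] [Module K V]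
    [FiniteDimensional K V] {ι : Type u} (W : ι → Submodule K V) (hW : ∀ i, W i ≠ ⊤)
    (hcov : ∀ v, ∃ i, v ∈ W i) : #K + 1 ≤ #ι := by
  induction hn : Module.finrank K V using Nat.strong_induction_on generalizing V ι with
  | _ n ih =>
  have : Nontrivial V := by
    by_contra!
    obtain ⟨i, -⟩ := hcov 0
    exact hW i (Subsingleton.elim _ _)
  obtain ⟨u, hu⟩ := exists_ne (0 : V)
  by_cases hpair : ∀ v, ∃ i, u ∈ W i ∧ v ∈ W i
  · let p := K ∙ u
    have hlt : Module.finrank K (V ⧸ p) < n := by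
      rw [← hn, ← p.finrank_quotient_add_finrank, finrank_span_singleton hu]; omega
    refine (ih _ hlt (fun i : {i // u ∈ W i} => (W i).map p.mkQ) (fun i h => hW i ?_)
      (fun v => ?_) rfl).trans (mk_subtype_le _)
    · rwa [map_mkQ_eq_top, sup_eq_right.mpr ((span_singleton_le_iff_mem _ _).mpr i.2)] at h
    · obtain ⟨v, rfl⟩ := p.mkQ_surjective v
      obtain ⟨i, hui, hvi⟩ := hpair v
      exact ⟨⟨i, hui⟩, mem_map_of_mem hvi⟩
  · push Not at hpair
    obtain ⟨v, hv⟩ := hpair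
    choose c hc using hcov
    have hinj : Injective (c ∘ projLinePoint (K := K) u v) := by
      intro a b hab
      by_contra hne
      have hb : projLinePoint u v b ∈ W (c (projLinePoint u v a)) := by
        rw [show c (projLinePoint u v a) = c (projLinePoint u v b) from hab]
        exact hc _
      obtain ⟨hu', hv'⟩ := mem_and_mem_of_projLinePoint_mem hne (hc _) hb
      exact hv _ hu' hv'
    simpa using mk_le_of_injective hinj

section CommRing

variable {R M : Type*} [CommRing R] [AddCommGroup M] [Module R M]

theorem Submodule.eq_top_of_forall_sup_smul_top_eq_top [Module.Finite R M] {N : Submodule R M}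
    (h : ∀ m : MaximalSpectrum R, N ⊔ m.asIdeal • ⊤ = ⊤) : N = ⊤ := by
  by_contra hN
  obtain ⟨P, hP, hNP⟩ := (eq_top_or_exists_le_coatom N).resolve_left hN
  have : IsSimpleModule R (M ⧸ P) := isSimpleModule_iff_isCoatom.mpr hP
  let m : MaximalSpectrum R := ⟨_, IsSimpleModule.annihilator_isMaximal (M := M ⧸ P)⟩
  have hmP : m.asIdeal • ⊤ ≤ P := smul_le.mpr fun r hr x _ =>
    (show ∀ y : M, r • y ∈ P by simpa [m, annihilator_quotient, mem_colon] using hr) x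
  exact hP.1 (top_unique (h m ▸ sup_le hNP hmP))

theorem Module.finite_setOf_smul_top_ne_top [IsArtinian R M] :
    {m : MaximalSpectrum R | m.asIdeal • (⊤ : Submodule R M) ≠ ⊤}.Finite := by
  classical
  -- the infimum of all `m • ⊤` is attained on a finite `s`, and a maximal ideal outside `s` is
  -- coprime to `∏ s`
  obtain ⟨s, hs⟩ :=
    Finset.exists_inf_le fun m : MaximalSpectrum R => m.asIdeal • (⊤ : Submodule R M)
  refine s.finite_toSet.subset fun p hp => ?_
  by_contra hps
  have hcop : p.asIdeal ⊔ ∏ m ∈ s, m.asIdeal = ⊤ := Ideal.isCoprime_iff_sup_eq.mp <|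
    IsCoprime.prod_right fun m hm => Ideal.isCoprime_of_isMaximal fun h =>
      hps (MaximalSpectrum.ext h ▸ hm)
  refine hp (top_unique ?_)
  calc ⊤ = (p.asIdeal ⊔ ∏ m ∈ s, m.asIdeal) • (⊤ : Submodule R M) := by rw [hcop, top_smul]
    _ = p.asIdeal • ⊤ ⊔ (∏ m ∈ s, m.asIdeal) • ⊤ := sup_smul _ _ _
    _ ≤ p.asIdeal • ⊤ := sup_le le_rfl <| (Finset.le_inf fun m hm =>
        smul_mono_left (Ideal.prod_le_inf.trans (Finset.inf_le hm))).trans (hs p)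

theorem Submodule.exists_forall_sub_mem_smul_top {ι : Type*} [Finite ι] {I : ι → Ideal R}
    (hI : Pairwise (IsCoprime on I)) (x : ι → M) :
    ∃ y : M, ∀ i, y - x i ∈ I i • (⊤ : Submodule R M) := by
  classical
  have := Fintype.ofFinite ι
  choose e he using fun j => Ideal.exists_forall_sub_mem_ideal hI (Pi.single j 1)
  refine ⟨∑ j, e j • x j, fun i => ?_⟩
  have : ∑ j, e j • x j - x i = ∑ j, (e j - (Pi.single j 1 : ι → R) i) • x j := by
    simp [sub_smul, Finset.sum_sub_distrib, Pi.single_apply]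
  rw [this]
  exact sum_mem fun j _ => smul_mem_smul (he j i) trivial

theorem exists_forall_sub_mem_maximal_smul_top [IsArtinian R M] (x : MaximalSpectrum R → M) :
    ∃ y : M, ∀ m : MaximalSpectrum R, y - x m ∈ m.asIdeal • (⊤ : Submodule R M) := by
  have := (Module.finite_setOf_smul_top_ne_top (R := R) (M := M)).to_subtype
  obtain ⟨y, hy⟩ := Submodule.exists_forall_sub_mem_smul_top
    (I := fun m : {m : MaximalSpectrum R | m.asIdeal • (⊤ : Submodule R M) ≠ ⊤} => m.1.asIdeal)
    (fun a b hab =>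
      Ideal.isCoprime_of_isMaximal fun h => hab (Subtype.ext (MaximalSpectrum.ext h)))
    (fun m => x m)
  refine ⟨y, fun m => ?_⟩
  by_cases hm : m.asIdeal • (⊤ : Submodule R M) = ⊤
  · rw [hm]; exact mem_top
  · exact hy ⟨m, hm⟩

theorem exists_maximal_forall_mem_sup_smul_top [Module.Finite R M] [IsArtinian R M]
    {S : Set (Submodule R M)} (hS : ∀ N ∈ S, N ≠ ⊤) (hcov : ∀ x, ∃ N ∈ S, x ∈ N) :
    ∃ m : MaximalSpectrum R,
      ∀ x : M, ∃ N ∈ S, N ⊔ m.asIdeal • ⊤ ≠ ⊤ ∧ x ∈ N ⊔ m.asIdeal • ⊤ := by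
  by_contra! h
  choose x hx using h
  obtain ⟨y, hy⟩ := exists_forall_sub_mem_maximal_smul_top x
  obtain ⟨N, hNS, hyN⟩ := hcov y
  obtain ⟨m, hm⟩ : ∃ m : MaximalSpectrum R, N ⊔ m.asIdeal • ⊤ ≠ ⊤ := by
    by_contra! h
    exact hS N hNS (eq_top_of_forall_sup_smul_top_eq_top h)
  refine hx m N hNS hm ?_
  simpa using sub_mem (mem_sup_left hyN) (mem_sup_right (hy m))

theorem exists_span_singleton_eq_top_of_rank_le_one [Module.Finite R M] [IsArtinian R M]
    (h : ∀ m : MaximalSpectrum R,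
      Module.rank (R ⧸ m.asIdeal) (M ⧸ m.asIdeal • (⊤ : Submodule R M)) ≤ 1) :
    ∃ x : M, span R {x} = ⊤ := by
  have hgen : ∀ m : MaximalSpectrum R, ∃ x : M, span R {x} ⊔ m.asIdeal • ⊤ = ⊤ := by
    intro m
    let _ := Ideal.Quotient.field m.asIdeal
    obtain ⟨v, hv⟩ := (Module.rank_le_one_iff_top_isPrincipal.mp (h m)).principal
    obtain ⟨x, rfl⟩ := mkQ_surjective _ v
    refine ⟨x, ?_⟩
    rw [sup_comm, ← map_mkQ_eq_top, map_span, Set.image_singleton,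
      ← restrictScalars_span R (R ⧸ m.asIdeal) Ideal.Quotient.mk_surjective, ← hv,
      restrictScalars_top]
  choose x hx using hgen
  obtain ⟨y, hy⟩ := exists_forall_sub_mem_maximal_smul_top x
  refine ⟨y, eq_top_of_forall_sup_smul_top_eq_top fun m =>
    top_unique ((hx m).ge.trans (sup_le ((span_singleton_le_iff_mem _ _).mpr ?_) le_sup_right))⟩
  simpa using sub_mem (mem_sup_left (mem_span_singleton_self y)) (mem_sup_right (hy m))

end CommRing

section CoveringNumber

variable {R M : Type u} [CommRing R] [AddCommGroup M] [Module R M]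

theorem coveringNumber_le_s11 {ι : Type u} (N : ι → Submodule R M) (hN : ∀ i, N i ≠ ⊤)
    (hcov : ∀ x, ∃ i, x ∈ N i) : coveringNumber R M ≤ #ι := by
  calc coveringNumber R M ≤ #(Set.range N) :=
        csInf_le' ⟨Set.range N, Set.forall_mem_range.mpr hN,
          by rw [Set.biUnion_range, Set.iUnion_eq_univ_iff]; exact hcov, rfl⟩
    _ ≤ #ι := mk_range_le

theorem exists_cover_card_eq_coveringNumber {ι : Type u} (N : ι → Submodule R M)
    (hN : ∀ i, N i ≠ ⊤) (hcov : ∀ x, ∃ i, x ∈ N i) :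
    ∃ S : Set (Submodule R M), (∀ P ∈ S, P ≠ ⊤) ∧ (∀ x, ∃ P ∈ S, x ∈ P) ∧
      #S = coveringNumber R M := by
  obtain ⟨S, hS, hcovS, hcard⟩ : coveringNumber R M ∈ _ :=
    csInf_mem ⟨_, Set.range N, Set.forall_mem_range.mpr hN,
      by rw [Set.biUnion_range, Set.iUnion_eq_univ_iff]; exact hcov, rfl⟩
  exact ⟨S, hS, fun x => by simpa using Set.iUnion₂_eq_univ_iff.mp hcovS x, hcard⟩

theorem exists_cover_option_of_mem_SMax {m : MaximalSpectrum R} (hm : m ∈ SMax R M) :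
    ∃ N : Option (R ⧸ m.asIdeal) → Submodule R M, (∀ a, N a ≠ ⊤) ∧ ∀ x, ∃ a, x ∈ N a := by
  let _ := Ideal.Quotient.field m.asIdeal
  obtain ⟨W, hW, hcov⟩ := exists_cover_option_of_two_le_rank (K := R ⧸ m.asIdeal) hm
  set p := m.asIdeal • (⊤ : Submodule R M)
  refine ⟨fun a => ((W a).restrictScalars R).comap p.mkQ, fun a h => hW a ?_,
    fun x => hcov (p.mkQ x)⟩
  rw [← restrictScalars_eq_top_iff R,
    ← map_comap_eq_of_surjective p.mkQ_surjective ((W a).restrictScalars R),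
    show comap p.mkQ ((W a).restrictScalars R) = ⊤ from h, Submodule.map_top, range_mkQ]

theorem exists_mem_SMax_card_add_one_le [Module.Finite R M] [IsArtinian R M]
    {S : Set (Submodule R M)} (hS : ∀ N ∈ S, N ≠ ⊤) (hcov : ∀ x, ∃ N ∈ S, x ∈ N) :
    ∃ m ∈ SMax R M, #(R ⧸ m.asIdeal) + 1 ≤ #S := by
  obtain ⟨m, hm⟩ := exists_maximal_forall_mem_sup_smul_top hS hcov
  let _ := Ideal.Quotient.field m.asIdeal
  set p := m.asIdeal • (⊤ : Submodule R M)
  let e := orderIsoOfAlgebraMapSurjective (M := M ⧸ p)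
    (Ideal.Quotient.mk_surjective (I := m.asIdeal))
  let W : {N : S // N.1 ⊔ p ≠ ⊤} → Submodule (R ⧸ m.asIdeal) (M ⧸ p) :=
    fun N => e.symm (N.1.1.map p.mkQ)
  have hW : ∀ N, W N ≠ ⊤ := fun N h => N.2 <| by
    rw [sup_comm, ← map_mkQ_eq_top, ← map_eq_top_iff e.symm]
    exact h
  have hcovW : ∀ v, ∃ N, v ∈ W N := by
    intro v
    obtain ⟨x, rfl⟩ := p.mkQ_surjective v
    obtain ⟨N, hNS, hN, hx⟩ := hm x
    refine ⟨⟨⟨N, hNS⟩, hN⟩, ?_⟩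
    show p.mkQ x ∈ N.map p.mkQ
    rwa [← mem_comap, comap_map_mkQ, sup_comm]
  exact ⟨m, two_le_rank_of_cover (K := R ⧸ m.asIdeal) W hW hcovW,
    (card_add_one_le_of_cover W hW hcovW).trans (mk_subtype_le _)⟩

end CoveringNumber

theorem stmt11_general (R M : Type u) [CommRing R] [AddCommGroup M] [Module R M]
    (hfl : IsFiniteLength R M) :
    (SMax R M = ∅ → ∃ x : M, Submodule.span R {x} = ⊤) ∧
    (SMax R M ≠ ∅ →
      coveringNumber R M = ⨅ m : SMax R M, (#(R ⧸ (m : MaximalSpectrum R).asIdeal) + 1)) := by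
  have : IsNoetherian R M := (isFiniteLength_iff_isNoetherian_isArtinian.mp hfl).1
  have : IsArtinian R M := (isFiniteLength_iff_isNoetherian_isArtinian.mp hfl).2
  refine ⟨fun h => exists_span_singleton_eq_top_of_rank_le_one fun m => ?_, fun h => ?_⟩
  · exact not_lt.mp fun hm => h.subset (two_le_iff_one_lt.mpr hm)
  · obtain ⟨m₀, hm₀⟩ := Set.nonempty_iff_ne_empty.mpr h
    have : Nonempty (SMax R M) := ⟨⟨m₀, hm₀⟩⟩
    refine le_antisymm (le_ciInf fun m => ?_) ?_
    · obtain ⟨N, hN, hcov⟩ := exists_cover_option_of_mem_SMax m.2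
      exact mk_option ▸ coveringNumber_le_s11 N hN hcov
    · obtain ⟨N, hN, hcov⟩ := exists_cover_option_of_mem_SMax hm₀
      obtain ⟨S, hS, hcovS, hcard⟩ := exists_cover_card_eq_coveringNumber N hN hcov
      obtain ⟨m, hm, hle⟩ := exists_mem_SMax_card_add_one_le hS hcovS
      exact (ciInf_le' _ ⟨m, hm⟩).trans (hcard ▸ hle)

/-- For a finite length semisimple module `M` over a commutative unital ring `R`: if
`S_M = ∅` then `M` is cyclic; otherwise the covering number of `M` equals
`min_{m ∈ S_M} |R/m| + 1`. -/
theorem stmt11 (R M : Type u) [CommRing R] [AddCommGroup M] [Module R M]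
    [IsSemisimpleModule R M] (hfl : IsFiniteLength R M) :
    (SMax R M = ∅ → ∃ x : M, Submodule.span R {x} = ⊤) ∧
    (SMax R M ≠ ∅ →
      coveringNumber R M = ⨅ m : SMax R M, (#(R ⧸ (m : MaximalSpectrum R).asIdeal) + 1)) :=
  stmt11_general R M hfl
end

section
/- A semisimple module over a commutative ring all of whose residue fields R/m are infinite is not the union of finitely many proper submodules. -/
/-!
By B. H. Neumann's lemma, if finitely many submodules cover `M` then one of them, `N k`, has
finite index, so `M ⧸ N k` is a finite nonzero module. But a nonzero module over such a ring is
infinite: the cyclic submodule spanned by `x ≠ 0` is `R ⧸ ann x`, which maps onto the infinite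
residue field `R ⧸ m` for any maximal ideal `m ⊇ ann x`.
-/

theorem Module.infinite_of_forall_infinite_quotient_maximal {R M : Type*} [CommRing R]
    [AddCommGroup M] [Module R M] [Nontrivial M]
    (hres : ∀ m : Ideal R, m.IsMaximal → Infinite (R ⧸ m)) : Infinite M := by
  obtain ⟨x, hx⟩ := exists_ne (0 : M)
  have hann : Ideal.torsionOf R M x ≠ ⊤ := (Ideal.torsionOf_eq_top_iff R x).not.mpr hx
  obtain ⟨m, hm, hle⟩ := Ideal.exists_le_maximal _ hann
  have := hres m hm
  have : Infinite (R ⧸ Ideal.torsionOf R M x) :=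
    Infinite.of_surjective _ (Ideal.Quotient.factor_surjective hle)
  have : Infinite (R ∙ x) :=
    Infinite.of_injective _ (Ideal.quotTorsionOfEquivSpanSingleton R M x).injective
  exact Infinite.of_injective ((↑) : R ∙ x → M) Subtype.val_injective

theorem stmt12_general (R M : Type*) [CommRing R] [AddCommGroup M] [Module R M]
    (hres : ∀ m : Ideal R, m.IsMaximal → Infinite (R ⧸ m))
    (ι : Type*) [Finite ι] (N : ι → Submodule R M) (hN : ∀ i, N i ≠ ⊤) :
    (⋃ i, (N i : Set M)) ≠ Set.univ := by
  intro hcovers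
  have := Fintype.ofFinite ι
  obtain ⟨k, -, hfi⟩ := Submodule.exists_finiteIndex_of_cover (s := Finset.univ) (p := N)
    (by simpa using hcovers)
  have : Finite (M ⧸ N k) := AddSubgroup.finite_quotient_of_finiteIndex
  have : Nontrivial (M ⧸ N k) := Submodule.Quotient.nontrivial_iff.mpr (hN k)
  have := Module.infinite_of_forall_infinite_quotient_maximal (M := M ⧸ N k) hres
  exact not_finite (M ⧸ N k)

/-- A semisimple module over a commutative ring all of whose residue fields are infinite
is not the union of finitely many proper submodules. -/
theorem stmt12 (R M : Type*) [CommRing R] [AddCommGroup M] [Module R M]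
    [IsSemisimpleModule R M]
    (hres : ∀ m : Ideal R, m.IsMaximal → Infinite (R ⧸ m))
    (ι : Type*) [Finite ι] (N : ι → Submodule R M) (hN : ∀ i, N i ≠ ⊤) :
    (⋃ i, (N i : Set M)) ≠ Set.univ :=
  stmt12_general R M hres ι N hN
end

section
/- If M is a module with small Jacobson radical over a commutative ring R, then the covering number of M equals the covering number of M/Jac(M). -/
universe u

open Cardinal

/-- The Jacobson radical of a module: the intersection of all maximal (proper) submodules. -/
def moduleJacobson (R M : Type u) [Ring R] [AddCommGroup M] [Module R M] :
    Submodule R M :=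
  sInf {N : Submodule R M | IsCoatom N}

/-- If `M` has small Jacobson radical over a commutative ring `R`, then the covering
number of `M` equals the covering number of `M / Jac(M)`. -/
theorem stmt15 (R M : Type u) [CommRing R] [AddCommGroup M] [Module R M]
    (hsmall : ∀ K : Submodule R M, moduleJacobson R M ⊔ K = ⊤ → K = ⊤) :
    coveringNumber R M = coveringNumber R (M ⧸ moduleJacobson R M) := by
  set J := moduleJacobson R M with hJ
  set f := J.mkQ with hf
  have hfs : Function.Surjective f := J.mkQ_surjective
  set T : Set Cardinal.{u} := {c | ∃ S : Set (Submodule R M),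
    (∀ N ∈ S, N ≠ ⊤) ∧ (⋃ N ∈ S, (N : Set M)) = Set.univ ∧ #S = c} with hT
  set T' : Set Cardinal.{u} := {c | ∃ S : Set (Submodule R (M ⧸ J)),
    (∀ N ∈ S, N ≠ ⊤) ∧ (⋃ N ∈ S, (N : Set (M ⧸ J))) = Set.univ ∧ #S = c} with hT'
  have hsub : T' ⊆ T := by
    rintro c ⟨S, hprop, hcov, rfl⟩
    refine ⟨(Submodule.comap f) '' S, ?_, ?_, ?_⟩
    · rintro N ⟨N', hN', rfl⟩ htop
      apply hprop N' hN'
      have := Submodule.map_comap_eq_of_surjective hfs N'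
      rw [htop, Submodule.map_top, Submodule.range_mkQ] at this
      exact this.symm
    · ext x
      simp only [Set.mem_iUnion, Set.mem_univ, iff_true]
      have : f x ∈ Set.univ := Set.mem_univ _
      rw [← hcov] at this
      simp only [Set.mem_iUnion] at this
      obtain ⟨N, hN, hx⟩ := this
      exact ⟨Submodule.comap f N, ⟨N, hN, rfl⟩, hx⟩
    · exact Cardinal.mk_image_eq (Submodule.comap_injective_of_surjective hfs)
  have hB : ∀ c ∈ T, ∃ c' ∈ T', c' ≤ c := by
    rintro c ⟨S, hprop, hcov, rfl⟩
    refine ⟨#((Submodule.map f) '' S), ⟨(Submodule.map f) '' S, ?_, ?_, rfl⟩,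
      Cardinal.mk_image_le⟩
    · rintro N ⟨N', hN', rfl⟩ htop
      apply hprop N' hN'
      apply hsmall
      have := congrArg (Submodule.comap f) htop
      rw [Submodule.comap_map_eq, Submodule.comap_top, Submodule.ker_mkQ] at this
      rw [sup_comm]
      exact this
    · ext y
      simp only [Set.mem_iUnion, Set.mem_univ, iff_true]
      obtain ⟨x, rfl⟩ := hfs y
      have : x ∈ Set.univ := Set.mem_univ _
      rw [← hcov] at this
      simp only [Set.mem_iUnion] at this
      obtain ⟨N, hN, hx⟩ := this
      exact ⟨Submodule.map f N, ⟨N, hN, rfl⟩, Submodule.mem_map_of_mem hx⟩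
  show sInf T = sInf T'
  rcases Set.eq_empty_or_nonempty T with h | h
  · have hT'e : T' = ∅ := Set.subset_empty_iff.mp (h ▸ hsub)
    rw [h, hT'e]
  · obtain ⟨c0, hc0⟩ := h
    obtain ⟨c0', hc0', _⟩ := hB c0 hc0
    refine le_antisymm (csInf_le_csInf (OrderBot.bddBelow T) ⟨c0', hc0'⟩ hsub) ?_
    refine le_csInf ⟨c0, hc0⟩ fun c hc => ?_
    obtain ⟨c', hc', hle⟩ := hB c hc
    exact (csInf_le (OrderBot.bddBelow T') hc').trans hle
end

section
/- Let M be a finitely generated R-module over a commutative ring R, S_M = {m ∈ mSpec(R) : dim_{R/m}(M/mM) ≥ 2}, and T = R \ ∪_{m ∈ S_M} m. Then for every m ∈ S_M, the localization T^{-1}m is a maximal ideal of T^{-1}R, and dim_{T^{-1}R/T^{-1}m}(T^{-1}M/T^{-1}(mM)) = dim_{R/m}(M/mM); consequently every maximal ideal of T^{-1}R is of the form T^{-1}m with m ∈ S_M, and S_{T^{-1}M} = mSpec(T^{-1}R). -/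
universe u

/-- The multiplicative set `T = R \ ⋃_{m ∈ S_M} m`. -/
def TSet (R M : Type u) [CommRing R] [AddCommGroup M] [Module R M] : Submonoid R where
  carrier := {x : R | ∀ m ∈ SMax R M, x ∉ m.asIdeal}
  one_mem' := fun m _ h1 => m.2.ne_top ((Ideal.eq_top_iff_one _).mpr h1)
  mul_mem' := fun {a b} ha hb m hm hab =>
    (m.2.isPrime.mem_or_mem hab).elim (ha m hm) (hb m hm)

/-!
A maximal ideal `m ∈ S_M` misses `T`, and for any submonoid `S` disjoint from a maximal ideal `m`
the elements of `S` already act invertibly on the `R ⧸ m`-modules `R ⧸ m` and `M ⧸ mM`; these are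
therefore their own localizations at `S`, so `R ⧸ m ≅ S⁻¹R ⧸ S⁻¹m` (whence `S⁻¹m` is maximal)
and `M ⧸ mM ≅ S⁻¹M ⧸ S⁻¹m S⁻¹M` compatibly.

For the converse, `S_M` is closed in the maximal spectrum: if `M ⧸ mM` is spanned by the image
of `x`, Nakayama gives `r ∉ m` with `r M ⊆ R x`, and then `M ⧸ m'M` is cyclic for every maximal
`m' ∌ r`. A maximal ideal `J` of `T⁻¹R` contracts to an ideal `p` of `R` contained in
`⋃_{m ∈ S_M} m`; then `p + ⋂_{m ∈ S_M} m` is proper, so it lies in a maximal ideal, which belongs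
to `S_M` by closedness, and `J = T⁻¹p` lies in (hence equals) its localization.
-/

universe v

section LocalizationOfQuotients

theorem IsLocalizedModule.bijective_of_isUnit {R M N : Type*} [CommRing R] [AddCommGroup M]
    [Module R M] [AddCommGroup N] [Module R N] (S : Submonoid R) (f : M →ₗ[R] N)
    [IsLocalizedModule S f] (hS : ∀ s ∈ S, IsUnit (algebraMap R (Module.End R M) s)) :
    Function.Bijective f := by
  have : IsLocalizedModule S (LinearMap.id : M →ₗ[R] M) :=
    ⟨fun s => hS s s.2, fun y => ⟨(y, 1), one_smul _ _⟩, fun e => ⟨1, congr_arg _ e⟩⟩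
  convert (IsLocalizedModule.linearEquiv S LinearMap.id f).bijective
  ext x
  exact (IsLocalizedModule.linearEquiv_apply S LinearMap.id f x).symm

theorem Ideal.isUnit_algebraMap_end_of_notMem {R V : Type*} [CommRing R] [AddCommGroup V]
    [Module R V] {m : Ideal R} [m.IsMaximal] [Module (R ⧸ m) V] [IsScalarTower R (R ⧸ m) V]
    {s : R} (hs : s ∉ m) : IsUnit (algebraMap R (Module.End R V) s) := by
  let := Ideal.Quotient.field m
  rw [← (Algebra.lsmul R (A := R ⧸ m) R V).commutes]
  exact (Ne.isUnit (mt Ideal.Quotient.eq_zero_iff_mem.mp hs)).map _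

variable {R : Type*} [CommRing R] (S : Submonoid R) {A : Type*} [CommRing A] [Algebra R A]
  [IsLocalization S A] {M N : Type v} [AddCommGroup M] [Module R M] [AddCommGroup N] [Module R N]
  [Module A N] [IsScalarTower R A N]

theorem Submodule.bijective_mapQ_of_localized'_eq (f : M →ₗ[R] N) [IsLocalizedModule S f]
    (M' : Submodule R M) (N' : Submodule A N) (hN' : M'.localized' A S f = N')
    (hle : M' ≤ (N'.restrictScalars R).comap f)
    (hS : ∀ s ∈ S, IsUnit (algebraMap R (Module.End R (M ⧸ M')) s)) :
    Function.Bijective (M'.mapQ (N'.restrictScalars R) f hle) := by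
  subst hN'
  exact IsLocalizedModule.bijective_of_isUnit S (M'.toLocalizedQuotient' A S f) hS

variable (A) in
theorem IsLocalization.bijective_quotientMap_map_of_disjoint {m : Ideal R} [m.IsMaximal]
    (hS : Disjoint (S : Set R) m) :
    Function.Bijective (Ideal.quotientMap (m.map (algebraMap R A)) (algebraMap R A)
      Ideal.le_comap_map) := by
  have : (m.map (algebraMap R A)).IsPrime := isPrime_of_isPrime_disjoint S A m inferInstance hS
  have hcomap := under_map_of_isPrime_disjoint S A (I := m) inferInstance hS
  exact ⟨Ideal.quotientMap_injective' hcomap.le,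
    surjective_quotientMap_of_maximal_of_localization S A (hcomap.symm ▸ inferInstance)⟩

variable (A) in
theorem IsLocalization.isMaximal_map_of_disjoint {m : Ideal R} [m.IsMaximal]
    (hS : Disjoint (S : Set R) m) : (m.map (algebraMap R A)).IsMaximal :=
  Ideal.Quotient.maximal_of_isField _ <| MulEquiv.isField (Ideal.Quotient.field m).toIsField
    (RingEquiv.ofBijective _ (bijective_quotientMap_map_of_disjoint S A hS)).symm

variable (A) in
theorem rank_quotient_map_smul_top_eq (f : M →ₗ[R] N) [IsLocalizedModule S f] {m : Ideal R}
    [m.IsMaximal] (hS : Disjoint (S : Set R) m) :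
    Module.rank (A ⧸ m.map (algebraMap R A)) (N ⧸ (m.map (algebraMap R A) • ⊤ : Submodule A N))
      = Module.rank (R ⧸ m) (M ⧸ (m • ⊤ : Submodule R M)) := by
  have hloc : (m • ⊤ : Submodule R M).localized' A S f = m.map (algebraMap R A) • ⊤ := by
    rw [Submodule.localized'_smul, Ideal.localized'_eq_map, Submodule.localized'_top]
  have hle : (m • ⊤ : Submodule R M) ≤
      ((m.map (algebraMap R A) • ⊤ : Submodule A N).restrictScalars R).comap f :=
    fun x hx => hloc ▸ ⟨x, hx, 1, by simp⟩
  let j := LinearEquiv.ofBijective _ (Submodule.bijective_mapQ_of_localized'_eq S f _ _ hloc hle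
    fun s hs => Ideal.isUnit_algebraMap_end_of_notMem (Set.disjoint_left.mp hS hs))
  refine (rank_eq_of_equiv_equiv (M₁ := N ⧸ (m.map (algebraMap R A) • ⊤ : Submodule A N)) _
    j.toAddEquiv (IsLocalization.bijective_quotientMap_map_of_disjoint S A hS) ?_).symm
  rintro ⟨r⟩ ⟨x⟩
  exact congrArg Submodule.Quotient.mk ((f.map_smul r x).trans (algebraMap_smul A r (f x)).symm)

end LocalizationOfQuotients

section CyclicLocus

variable {R M : Type*} [CommRing R] [AddCommGroup M] [Module R M]

theorem rank_quotient_smul_top_le_one_of_smul_mem_span {m : Ideal R} [m.IsMaximal] {r : R}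
    {x : M} (hr : r ∉ m) (hrx : ∀ y : M, r • y ∈ R ∙ x) :
    Module.rank (R ⧸ m) (M ⧸ (m • ⊤ : Submodule R M)) ≤ 1 := by
  let := Ideal.Quotient.field m
  have hr' : Ideal.Quotient.mk m r ≠ 0 := mt Ideal.Quotient.eq_zero_iff_mem.mp hr
  refine rank_le_one_iff.mpr ⟨Submodule.Quotient.mk x, fun v => ?_⟩
  obtain ⟨y, rfl⟩ := Submodule.Quotient.mk_surjective _ v
  obtain ⟨a, ha⟩ := Submodule.mem_span_singleton.mp (hrx y)
  refine ⟨(Ideal.Quotient.mk m r)⁻¹ * Ideal.Quotient.mk m a, ?_⟩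
  rw [mul_smul, Module.Quotient.mk_smul_mk, ha, ← Module.Quotient.mk_smul_mk, inv_smul_smul₀ hr']

theorem exists_smul_mem_span_of_rank_le_one [Module.Finite R M] {m : Ideal R} [m.IsMaximal]
    (h : Module.rank (R ⧸ m) (M ⧸ (m • ⊤ : Submodule R M)) ≤ 1) :
    ∃ r ∉ m, ∃ x : M, ∀ y : M, r • y ∈ R ∙ x := by
  let := Ideal.Quotient.field m
  obtain ⟨v, hv⟩ := rank_le_one_iff.mp h
  obtain ⟨x, rfl⟩ := Submodule.Quotient.mk_surjective _ v
  have hspan : ⊤ ≤ (R ∙ x) ⊔ m • ⊤ := by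
    intro y _
    obtain ⟨c, hc⟩ := hv (Submodule.Quotient.mk y)
    obtain ⟨a, rfl⟩ := Ideal.Quotient.mk_surjective c
    rw [Module.Quotient.mk_smul_mk, Submodule.Quotient.eq] at hc
    exact Submodule.mem_sup.mpr ⟨a • x, Submodule.mem_span_singleton.mpr ⟨a, rfl⟩,
      y - a • x, by simpa using neg_mem hc, add_sub_cancel _ _⟩
  obtain ⟨r, hr1, hr⟩ := Submodule.exists_sub_one_mem_and_smul_le_of_fg_of_le_sup
    (Module.Finite.fg_top) le_rfl hspan
  refine ⟨r, fun hr0 => ?_, x, fun y => hr (Submodule.smul_mem_pointwise_smul y r ⊤ trivial)⟩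
  exact Ideal.IsMaximal.ne_top ‹_› ((Ideal.eq_top_iff_one m).mpr (by simpa using m.sub_mem hr0 hr1))

end CyclicLocus

theorem MaximalSpectrum.exists_mem_le_of_subset_biUnion {R : Type*} [CommRing R]
    {𝒮 : Set (MaximalSpectrum R)}
    (h𝒮 : ∀ m : MaximalSpectrum R, (⨅ m' ∈ 𝒮, m'.asIdeal) ≤ m.asIdeal → m ∈ 𝒮)
    {p : Ideal R} (hp : (p : Set R) ⊆ ⋃ m ∈ 𝒮, (m.asIdeal : Set R)) :
    ∃ m ∈ 𝒮, p ≤ m.asIdeal := by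
  have hne : p ⊔ (⨅ m' ∈ 𝒮, m'.asIdeal) ≠ ⊤ := by
    rw [Ne, Ideal.eq_top_iff_one, Submodule.mem_sup]
    rintro ⟨x, hx, i, hi, hxi⟩
    obtain ⟨m, hm, hxm⟩ := Set.mem_iUnion₂.mp (hp hx)
    have him : i ∈ m.asIdeal := (Submodule.mem_iInf _).mp ((Submodule.mem_iInf _).mp hi m) hm
    exact m.isMaximal.ne_top ((Ideal.eq_top_iff_one _).mpr (hxi ▸ add_mem hxm him))
  obtain ⟨n, hn, hle⟩ := Ideal.exists_le_maximal _ hne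
  exact ⟨⟨n, hn⟩, h𝒮 _ (le_sup_right.trans hle), le_sup_left.trans hle⟩

section SMax

variable {R M : Type u} [CommRing R] [AddCommGroup M] [Module R M]

theorem disjoint_TSet {m : MaximalSpectrum R} (hm : m ∈ SMax R M) :
    Disjoint (TSet R M : Set R) m.asIdeal :=
  Set.disjoint_left.mpr fun _ ht => ht m hm

theorem mem_SMax_of_iInf_le [Module.Finite R M] (m : MaximalSpectrum R)
    (h : (⨅ m' ∈ SMax R M, m'.asIdeal) ≤ m.asIdeal) : m ∈ SMax R M := by
  have := m.isMaximal
  by_contra hm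
  rw [SMax, Set.mem_ofPred_eq, Cardinal.two_le_iff_one_lt, not_lt] at hm
  obtain ⟨r, hrm, x, hrx⟩ := exists_smul_mem_span_of_rank_le_one hm
  refine hrm (h ((Submodule.mem_iInf _).mpr fun m' => (Submodule.mem_iInf _).mpr fun hm' => ?_))
  by_contra hrm'
  have := m'.isMaximal
  exact (Cardinal.one_lt_two.trans_le (hm'.trans
    (rank_quotient_smul_top_le_one_of_smul_mem_span hrm' hrx))).false

theorem exists_mem_SMax_eq_map [Module.Finite R M] (J : Ideal (Localization (TSet R M)))
    [J.IsMaximal] :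
    ∃ m ∈ SMax R M, J = m.asIdeal.map (algebraMap R (Localization (TSet R M))) := by
  have hJ := ((IsLocalization.isPrime_iff_isPrime_disjoint (TSet R M) _ J).mp inferInstance).2
  obtain ⟨m, hm, hle⟩ := MaximalSpectrum.exists_mem_le_of_subset_biUnion mem_SMax_of_iInf_le
    (p := J.comap (algebraMap R _)) fun x hx => Set.mem_iUnion₂.mpr <| by
      by_contra! hx'
      exact Set.disjoint_left.mp hJ hx' hx
  have := m.isMaximal
  refine ⟨m, hm, Ideal.IsMaximal.eq_of_le ‹_›
    (IsLocalization.isMaximal_map_of_disjoint _ _ (disjoint_TSet hm)).ne_top ?_⟩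
  calc J = (J.comap (algebraMap R _)).map (algebraMap R _) :=
        (IsLocalization.map_under (TSet R M) _ J).symm
    _ ≤ _ := Ideal.map_mono hle

end SMax

/-- Let `M` be a finitely generated `R`-module, `S_M` the set of maximal ideals with
`dim_{R/m}(M/mM) ≥ 2`, and `T = R \ ⋃_{m ∈ S_M} m`. Then for every `m ∈ S_M` the ideal
`T⁻¹m` of `T⁻¹R` is maximal and
`dim_{T⁻¹R/T⁻¹m}(T⁻¹M/T⁻¹(mM)) = dim_{R/m}(M/mM)`; consequently every maximal ideal of
`T⁻¹R` has the form `T⁻¹m` with `m ∈ S_M`, and `S_{T⁻¹M} = mSpec(T⁻¹R)`. -/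
theorem stmt19 (R M : Type u) [CommRing R] [AddCommGroup M] [Module R M]
    [Module.Finite R M] :
    (∀ m : MaximalSpectrum R, m ∈ SMax R M →
      (Ideal.map (algebraMap R (Localization (TSet R M))) m.asIdeal).IsMaximal ∧
      Module.rank
        (Localization (TSet R M) ⧸
          Ideal.map (algebraMap R (Localization (TSet R M))) m.asIdeal)
        (LocalizedModule (TSet R M) M ⧸
          (Ideal.map (algebraMap R (Localization (TSet R M))) m.asIdeal • ⊤ :
            Submodule (Localization (TSet R M)) (LocalizedModule (TSet R M) M)))
        = Module.rank (R ⧸ m.asIdeal) (M ⧸ (m.asIdeal • ⊤ : Submodule R M))) ∧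
    (∀ J : Ideal (Localization (TSet R M)), J.IsMaximal →
      ∃ m ∈ SMax R M,
        J = Ideal.map (algebraMap R (Localization (TSet R M))) m.asIdeal) ∧
    (∀ J : Ideal (Localization (TSet R M)), J.IsMaximal →
      2 ≤ Module.rank (Localization (TSet R M) ⧸ J)
        (LocalizedModule (TSet R M) M ⧸
          (J • ⊤ : Submodule (Localization (TSet R M)) (LocalizedModule (TSet R M) M)))) := by
  have localize : ∀ m ∈ SMax R M, _ ∧ _ := fun m hm =>
    have := m.isMaximal
    ⟨IsLocalization.isMaximal_map_of_disjoint _ (Localization (TSet R M)) (disjoint_TSet hm),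
      rank_quotient_map_smul_top_eq _ (Localization (TSet R M))
        (LocalizedModule.mkLinearMap (TSet R M) M) (disjoint_TSet hm)⟩
  refine ⟨localize, fun J _ => exists_mem_SMax_eq_map J, fun J _ => ?_⟩
  obtain ⟨m, hm, rfl⟩ := exists_mem_SMax_eq_map J
  exact (localize m hm).2 ▸ hm
end
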